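/- arXiv:2601.03008 — 2 statements merged into one kernel-verified Lean document; each statement's English description precedes it below -/
import Mathlib

section
/- Let m, p be positive integers, S the set of matrices in ℝ^{m×p} all of whose columns have unit Euclidean norm, V⁰ ∈ S, C ∈ ℝ^{m×p}, ρ > 0, L > 0, and set G := (1/(2ρ+L))(L V⁰ − C). If every column of G is nonzero, then the matrix obtained from G by normalizing each column to unit Euclidean norm is a global minimizer over S of the function V ↦ ⟨C, V⟩ + ρ‖V‖_F² + (L/2)‖V − V⁰‖_F². (This gives the closed-form solution of the linearized proximal subproblem in the DCRA inner solver.) -/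
/-!
On `S` we have `‖V‖_F² = p` and `‖V - V⁰‖_F²` is `‖V⁰‖_F² + p - 2⟨V⁰, V⟩`,
so the objective is `⟨C - L V⁰, V⟩ = -(2ρ + L)⟨G, V⟩` up to a constant. Maximizing `⟨G, V⟩`
over `S` splits into one problem per column, and by Cauchy–Schwarz each column of `G` is best
matched by its own normalization.
-/

open Matrix

noncomputable section

/-- Squared Frobenius norm `‖A‖_F²`. -/
def frobSq {a b : ℕ} (A : Matrix (Fin a) (Fin b) ℝ) : ℝ := ∑ i, ∑ j, A i j ^ 2

/-- Frobenius norm `‖A‖_F`. -/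
def frobNorm {a b : ℕ} (A : Matrix (Fin a) (Fin b) ℝ) : ℝ := Real.sqrt (frobSq A)

/-- Trace (Frobenius) inner product `⟨A,B⟩ = tr(AᵀB)`. -/
def frobInner {a b : ℕ} (A B : Matrix (Fin a) (Fin b) ℝ) : ℝ := ∑ i, ∑ j, A i j * B i j

/-- Squared spectral norm: `sup {‖Vx‖₂² : ‖x‖₂ = 1}`. -/
def specSq {a b : ℕ} (V : Matrix (Fin a) (Fin b) ℝ) : ℝ :=
  sSup {c | ∃ x : Fin b → ℝ, (∑ j, x j ^ 2) = 1 ∧ c = ∑ i, (∑ j, V i j * x j) ^ 2}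

/-- Spectral norm (largest singular value). -/
def specNorm {a b : ℕ} (V : Matrix (Fin a) (Fin b) ℝ) : ℝ := Real.sqrt (specSq V)

/-- Membership in `S`: all columns have unit Euclidean norm. -/
def unitCols {a b : ℕ} (V : Matrix (Fin a) (Fin b) ℝ) : Prop :=
  ∀ j, ∑ i, V i j ^ 2 = 1

/-- Column-wise normalization to unit Euclidean norm (projection onto `S`). -/
def normalizeCols {a b : ℕ} (G : Matrix (Fin a) (Fin b) ℝ) : Matrix (Fin a) (Fin b) ℝ :=
  Matrix.of fun i j => G i j / Real.sqrt (∑ i', G i' j ^ 2)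

/-- `u` is a unit eigenvector of `VᵀV` associated with its largest eigenvalue `lam`
(the Rayleigh-quotient bound states that `lam` is the largest eigenvalue). -/
def isTopEigen {a b : ℕ} (V : Matrix (Fin a) (Fin b) ℝ) (lam : ℝ) (u : Fin b → ℝ) : Prop :=
  (∑ j, u j ^ 2) = 1 ∧ (Vᵀ * V) *ᵥ u = lam • u ∧
    ∀ x : Fin b → ℝ, x ⬝ᵥ ((Vᵀ * V) *ᵥ x) ≤ lam * (x ⬝ᵥ x)

/-- `Γ(V) = −2 V u uᵀ` where `u = u₁(V)`. -/
def GammaOf {a b : ℕ} (V : Matrix (Fin a) (Fin b) ℝ) (u : Fin b → ℝ) :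
    Matrix (Fin a) (Fin b) ℝ := (-2 : ℝ) • (V * vecMulVec u u)

/-- The update direction `G(V) = (2ρ+L)⁻¹ (L V − ∇f̃(V) − ρ Γ(V))`. -/
def Gmap {a b : ℕ} (gradf : Matrix (Fin a) (Fin b) ℝ → Matrix (Fin a) (Fin b) ℝ)
    (ρ L : ℝ) (V : Matrix (Fin a) (Fin b) ℝ) (u : Fin b → ℝ) : Matrix (Fin a) (Fin b) ℝ :=
  (2 * ρ + L)⁻¹ • (L • V - gradf V - ρ • GammaOf V u)

/-- Penalized objective `Φ_ρ(V) = f̃(V) + ρ(‖V‖_F² − ‖V‖²)`. -/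
def Phi {a b : ℕ} (f : Matrix (Fin a) (Fin b) ℝ → ℝ) (ρ : ℝ)
    (V : Matrix (Fin a) (Fin b) ℝ) : ℝ := f V + ρ * (frobSq V - specSq V)

/-- Stationarity residual `𝒢_ρ(V,Γ) = inf_t ‖∇f̃(V) + 2ρV + ρΓ + V·Diag(t)‖_F`. -/
def Gres {a b : ℕ} (gradf : Matrix (Fin a) (Fin b) ℝ → Matrix (Fin a) (Fin b) ℝ) (ρ : ℝ)
    (V Γ : Matrix (Fin a) (Fin b) ℝ) : ℝ :=
  ⨅ t : Fin b → ℝ, frobNorm (gradf V + (2 * ρ) • V + ρ • Γ + V * Matrix.diagonal t)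

/-- The all-ones matrix `E` scaled by `1/√m`. -/
def Escaled (a b : ℕ) : Matrix (Fin a) (Fin b) ℝ :=
  (Real.sqrt a)⁻¹ • Matrix.of fun _ _ => (1 : ℝ)

section Frobenius

variable {a b : ℕ}

lemma frobInner_smul_left (c : ℝ) (A B : Matrix (Fin a) (Fin b) ℝ) :
    frobInner (c • A) B = c * frobInner A B := by
  simp only [frobInner, Matrix.smul_apply, smul_eq_mul, Finset.mul_sum, mul_assoc]

lemma frobInner_sub_left (A B W : Matrix (Fin a) (Fin b) ℝ) :
    frobInner (A - B) W = frobInner A W - frobInner B W := by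
  simp only [frobInner, Matrix.sub_apply, sub_mul, Finset.sum_sub_distrib]

lemma frobSq_sub (A B : Matrix (Fin a) (Fin b) ℝ) :
    frobSq (A - B) = frobSq A - 2 * frobInner B A + frobSq B := by
  have h (x y : ℝ) : (x - y) ^ 2 = x ^ 2 - 2 * (y * x) + y ^ 2 := by ring
  simp_rw [frobSq, frobInner, Matrix.sub_apply, h, Finset.sum_add_distrib, Finset.sum_sub_distrib,
    Finset.mul_sum]

lemma frobSq_of_unitCols {V : Matrix (Fin a) (Fin b) ℝ} (hV : unitCols V) : frobSq V = b := by
  rw [frobSq, Finset.sum_comm]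
  simp [show ∀ j, ∑ i, V i j ^ 2 = 1 from hV]

lemma unitCols_normalizeCols {G : Matrix (Fin a) (Fin b) ℝ} (hG : ∀ j, ∃ i, G i j ≠ 0) :
    unitCols (normalizeCols G) := by
  intro j
  obtain ⟨i, hi⟩ := hG j
  have hpos : 0 < ∑ i', G i' j ^ 2 :=
    Finset.sum_pos' (fun _ _ => sq_nonneg _) ⟨i, Finset.mem_univ i, by positivity⟩
  simp only [normalizeCols, of_apply, div_pow, ← Finset.sum_div,
    Real.sq_sqrt hpos.le, div_self hpos.ne']

/-- Also for a zero column, which `normalizeCols` sends to zero since `x / √0 = 0`. -/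
lemma sum_mul_normalizeCols (G : Matrix (Fin a) (Fin b) ℝ) (j : Fin b) :
    ∑ i, G i j * normalizeCols G i j = √(∑ i, G i j ^ 2) := by
  simp only [normalizeCols, of_apply, mul_div_assoc', ← sq, ← Finset.sum_div, Real.div_sqrt]

lemma frobInner_le_frobInner_normalizeCols (G : Matrix (Fin a) (Fin b) ℝ)
    {V : Matrix (Fin a) (Fin b) ℝ} (hV : unitCols V) :
    frobInner G V ≤ frobInner G (normalizeCols G) := by
  rw [frobInner, frobInner, Finset.sum_comm, Finset.sum_comm (γ := Fin a)]
  refine Finset.sum_le_sum fun j _ => ?_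
  calc ∑ i, G i j * V i j ≤ √(∑ i, G i j ^ 2) * √(∑ i, V i j ^ 2) :=
        Real.sum_mul_le_sqrt_mul_sqrt _ _ _
    _ = ∑ i, G i j * normalizeCols G i j := by
        rw [hV j, Real.sqrt_one, mul_one, sum_mul_normalizeCols]

lemma linearizedObjective_eq_of_unitCols (V0 C : Matrix (Fin a) (Fin b) ℝ) (ρ L : ℝ)
    {W : Matrix (Fin a) (Fin b) ℝ} (hW : unitCols W) :
    frobInner C W + ρ * frobSq W + (L / 2) * frobSq (W - V0)
      = frobInner (C - L • V0) W + (ρ * b + L / 2 * (b + frobSq V0)) := by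
  rw [frobSq_sub, frobInner_sub_left, frobInner_smul_left, frobSq_of_unitCols hW]
  ring

end Frobenius

theorem linearized_subproblem_closed_form_general (m p : ℕ)
    (V0 C : Matrix (Fin m) (Fin p) ℝ) (ρ L : ℝ) (hρ : 0 < ρ) (hL : 0 < L)
    (G : Matrix (Fin m) (Fin p) ℝ) (hG : G = (2 * ρ + L)⁻¹ • (L • V0 - C))
    (hcol : ∀ j, ∃ i, G i j ≠ 0) :
    unitCols (normalizeCols G) ∧
    ∀ V : Matrix (Fin m) (Fin p) ℝ, unitCols V →
      frobInner C (normalizeCols G) + ρ * frobSq (normalizeCols G)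
          + (L / 2) * frobSq (normalizeCols G - V0)
        ≤ frobInner C V + ρ * frobSq V + (L / 2) * frobSq (V - V0) := by
  have hN := unitCols_normalizeCols hcol
  refine ⟨hN, fun V hV => ?_⟩
  have hsum : 0 < 2 * ρ + L := by linarith
  have hlin : C - L • V0 = (-(2 * ρ + L)) • G := by
    rw [hG, smul_smul, neg_mul, mul_inv_cancel₀ hsum.ne', neg_smul, one_smul, neg_sub]
  rw [linearizedObjective_eq_of_unitCols V0 C ρ L hN,
    linearizedObjective_eq_of_unitCols V0 C ρ L hV, hlin, frobInner_smul_left, frobInner_smul_left]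
  have := mul_le_mul_of_nonneg_left (frobInner_le_frobInner_normalizeCols G hV) hsum.le
  linarith

/-- Closed-form solution of the linearized proximal subproblem: if every column
of `G = (2ρ+L)⁻¹(L V⁰ − C)` is nonzero, then the column-normalization of `G` globally minimizes
`V ↦ ⟨C,V⟩ + ρ‖V‖_F² + (L/2)‖V − V⁰‖_F²` over the set `S` of unit-column matrices. -/
theorem linearized_subproblem_closed_form (m p : ℕ) (hm : 0 < m) (hp : 0 < p)
    (V0 C : Matrix (Fin m) (Fin p) ℝ) (ρ L : ℝ) (hρ : 0 < ρ) (hL : 0 < L)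
    (hV0 : unitCols V0)
    (G : Matrix (Fin m) (Fin p) ℝ) (hG : G = (2 * ρ + L)⁻¹ • (L • V0 - C))
    (hcol : ∀ j, ∃ i, G i j ≠ 0) :
    unitCols (normalizeCols G) ∧
    ∀ V : Matrix (Fin m) (Fin p) ℝ, unitCols V →
      frobInner C (normalizeCols G) + ρ * frobSq (normalizeCols G)
          + (L / 2) * frobSq (normalizeCols G - V0)
        ≤ frobInner C V + ρ * frobSq V + (L / 2) * frobSq (V - V0) :=
  linearized_subproblem_closed_form_general m p V0 C ρ L hρ hL G hG hcol

end
end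

section
/- Let V ∈ ℝ^{m×p} have all columns of unit Euclidean norm and suppose ‖V‖_F² − ‖V‖² ≤ c₀² for some c₀ ∈ (0,1). Then any unit eigenvector u₁ of VᵀV associated with its largest eigenvalue satisfies |（u₁)_j| ≥ √(1 − c₀²)/‖V‖ > 0 for every index j ∈ {1,…,p}; in particular, since 1 ≤ ‖V‖ ≤ √p, every entry of u₁ satisfies |(u₁)_j| ≥ √(1 − c₀²)/√p > 0. -/
/-! Because `VᵀV` has unit diagonal, the Rayleigh bound `λ ⟪u, x⟫² ≤ xᵀVᵀVx` along the top
eigenvector `u`, taken at the basis vectors, gives `λ u_k² ≤ 1` for every `k`. Since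
`‖V‖_F² = p` and `‖V‖² = λ`, the gap `‖V‖_F² − ‖V‖² = ∑ₖ (1 − λ u_k²)` is a sum of
nonnegative terms, so each of them is at most `c₀²`, i.e. `λ u_j² ≥ 1 − c₀²`; nonnegativity
of the terms also gives `λ ≤ p`. -/

open Matrix

noncomputable section

theorem Matrix.PosSemidef.mul_dotProduct_sq_le {n : Type*} [Fintype n] {A : Matrix n n ℝ}
    (hA : A.PosSemidef) {lam : ℝ} {u : n → ℝ} (hu : u ⬝ᵥ u = 1) (hAu : A *ᵥ u = lam • u)
    (x : n → ℝ) : lam * (u ⬝ᵥ x) ^ 2 ≤ x ⬝ᵥ (A *ᵥ x) := by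
  set α := u ⬝ᵥ x
  have hsymm : Aᵀ = A := by simpa using hA.isHermitian.eq
  have hux : u ⬝ᵥ (A *ᵥ x) = lam * α := by
    rw [dotProduct_mulVec, ← mulVec_transpose, hsymm, hAu, smul_dotProduct, smul_eq_mul]
  have hproj : (x - α • u) ⬝ᵥ (A *ᵥ (x - α • u)) = x ⬝ᵥ (A *ᵥ x) - lam * α ^ 2 := by
    simp only [mulVec_sub, mulVec_smul, hAu, sub_dotProduct, dotProduct_sub, smul_dotProduct,
      dotProduct_smul, hux, hu, smul_eq_mul]
    rw [dotProduct_comm x u]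
    ring
  have := hA.dotProduct_mulVec_nonneg (x - α • u)
  simp only [star_trivial] at this
  linarith

theorem Matrix.sum_sq_sum_mul_eq_dotProduct_transpose_mul_self_mulVec {m n : Type*}
    [Fintype m] [Fintype n] (V : Matrix m n ℝ) (x : n → ℝ) :
    ∑ i, (∑ j, V i j * x j) ^ 2 = x ⬝ᵥ ((Vᵀ * V) *ᵥ x) := by
  rw [← mulVec_mulVec, dotProduct_mulVec, vecMul_transpose]
  simp only [dotProduct, mulVec, sq]

theorem Matrix.transpose_mul_self_apply_self_of_unitCols {a b : ℕ}
    {V : Matrix (Fin a) (Fin b) ℝ} (hV : unitCols V) (k : Fin b) : (Vᵀ * V) k k = 1 := by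
  simpa only [mul_apply, transpose_apply, sq] using hV k

theorem frobSq_eq_of_unitCols {a b : ℕ} {V : Matrix (Fin a) (Fin b) ℝ} (hV : unitCols V) :
    frobSq V = b := by
  simp [frobSq, Finset.sum_comm (f := fun i j => V i j ^ 2), hV _]

namespace isTopEigen

variable {a b : ℕ} {V : Matrix (Fin a) (Fin b) ℝ} {lam : ℝ} {u : Fin b → ℝ}

theorem dotProduct_self (htop : isTopEigen V lam u) : u ⬝ᵥ u = 1 := by
  simpa only [dotProduct, sq] using htop.1

theorem isGreatest (htop : isTopEigen V lam u) :
    IsGreatest {c | ∃ x : Fin b → ℝ, (∑ j, x j ^ 2) = 1 ∧ c = ∑ i, (∑ j, V i j * x j) ^ 2}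
      lam := by
  simp only [sum_sq_sum_mul_eq_dotProduct_transpose_mul_self_mulVec]
  refine ⟨⟨u, htop.1, ?_⟩, ?_⟩
  · rw [htop.2.1, dotProduct_smul, htop.dotProduct_self, smul_eq_mul, mul_one]
  · rintro c ⟨x, hx, rfl⟩
    have hxx : x ⬝ᵥ x = 1 := by simpa only [dotProduct, sq] using hx
    simpa only [hxx, mul_one] using htop.2.2 x

theorem specSq_eq (htop : isTopEigen V lam u) : specSq V = lam :=
  htop.isGreatest.csSup_eq

theorem mul_sq_le_one (htop : isTopEigen V lam u) (hV : unitCols V) (k : Fin b) :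
    lam * u k ^ 2 ≤ 1 := by
  have h := (posSemidef_conjTranspose_mul_self V).mul_dotProduct_sq_le htop.dotProduct_self
    htop.2.1 (Pi.single k 1)
  simpa [mulVec_single, transpose_mul_self_apply_self_of_unitCols hV k] using h

theorem frobSq_sub_specSq_eq_sum (htop : isTopEigen V lam u) (hV : unitCols V) :
    frobSq V - specSq V = ∑ k, (1 - lam * u k ^ 2) := by
  rw [frobSq_eq_of_unitCols hV, htop.specSq_eq, Finset.sum_sub_distrib, ← Finset.mul_sum, htop.1]
  simp

theorem one_sub_mul_sq_le (htop : isTopEigen V lam u) (hV : unitCols V) (j : Fin b) :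
    1 - lam * u j ^ 2 ≤ frobSq V - specSq V := by
  rw [htop.frobSq_sub_specSq_eq_sum hV]
  exact Finset.single_le_sum (f := fun k => 1 - lam * u k ^ 2)
    (fun k _ => sub_nonneg.mpr (htop.mul_sq_le_one hV k)) (Finset.mem_univ j)

theorem le_card (htop : isTopEigen V lam u) (hV : unitCols V) : lam ≤ b := by
  have h := htop.frobSq_sub_specSq_eq_sum hV
  rw [frobSq_eq_of_unitCols hV, htop.specSq_eq] at h
  have : 0 ≤ ∑ k, (1 - lam * u k ^ 2) :=
    Finset.sum_nonneg fun k _ => sub_nonneg.mpr (htop.mul_sq_le_one hV k)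
  linarith

end isTopEigen

theorem Real.sqrt_div_sqrt_le_abs {c lam t : ℝ} (hlam : 0 < lam) (h : c ≤ lam * t ^ 2) :
    √c / √lam ≤ |t| := by
  rw [← Real.sqrt_div' c hlam.le, ← Real.sqrt_sq_eq_abs]
  exact Real.sqrt_le_sqrt ((div_le_iff₀' hlam).mpr h)

/-- If `V` has unit columns and `‖V‖_F² − ‖V‖² ≤ c₀²` with `c₀ ∈ (0,1)`, then
any unit eigenvector `u₁` of `VᵀV` for its largest eigenvalue has entries bounded below in
magnitude by `√(1−c₀²)/‖V‖ > 0`, hence by `√(1−c₀²)/√p > 0`. -/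
theorem top_eigenvector_entries_bounded_below (m p : ℕ) (hp : 0 < p)
    (V : Matrix (Fin m) (Fin p) ℝ) (hV : unitCols V)
    (c0 : ℝ) (hc0 : c0 ∈ Set.Ioo (0 : ℝ) 1) (hgap : frobSq V - specSq V ≤ c0 ^ 2)
    (lam : ℝ) (u : Fin p → ℝ) (htop : isTopEigen V lam u) :
    (0 < Real.sqrt (1 - c0 ^ 2) / Real.sqrt p) ∧
    ∀ j, Real.sqrt (1 - c0 ^ 2) / specNorm V ≤ |u j| ∧
      Real.sqrt (1 - c0 ^ 2) / Real.sqrt p ≤ |u j| ∧ 0 < |u j| := by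
  have hc : 0 < 1 - c0 ^ 2 := by nlinarith [hc0.1, hc0.2]
  have hentry : ∀ j, 1 - c0 ^ 2 ≤ lam * u j ^ 2 := fun j => by
    linarith [htop.one_sub_mul_sq_le hV j]
  have hlam : 0 < lam := by
    have := hentry ⟨0, hp⟩
    nlinarith [sq_nonneg (u ⟨0, hp⟩)]
  have hsqrt_c : 0 < √(1 - c0 ^ 2) := Real.sqrt_pos.mpr hc
  have hdiv_le : √(1 - c0 ^ 2) / √p ≤ √(1 - c0 ^ 2) / √lam :=
    div_le_div_of_nonneg_left hsqrt_c.le (Real.sqrt_pos.mpr hlam)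
      (Real.sqrt_le_sqrt (htop.le_card hV))
  refine ⟨div_pos hsqrt_c (Real.sqrt_pos.mpr (Nat.cast_pos.mpr hp)), fun j => ?_⟩
  have hbound := Real.sqrt_div_sqrt_le_abs hlam (hentry j)
  rw [specNorm, htop.specSq_eq]
  exact ⟨hbound, hdiv_le.trans hbound,
    (div_pos hsqrt_c (Real.sqrt_pos.mpr hlam)).trans_le hbound⟩

end
end
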